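/- Let u be a smooth function on ℝ⁺ decaying at infinity, and ε > 0. If u(0) = u_x(0) = 0, then 2∫_{ℝ⁺} (1+x)(u_{xxx} − ε u_{xxxxx}) u dx = 3∫ u_x² dx + ε u_{xx}(0)² + 5ε ∫ u_{xx}² dx. -/

import Mathlib

open MeasureTheory Set Filter Topology

noncomputable def DD (u : SchwartzMap ℝ ℝ) : ℕ → SchwartzMap ℝ ℝ
  | 0 => u
  | (k+1) => SchwartzMap.derivCLM ℝ ℝ (DD u k)

lemma DD_coe (u : SchwartzMap ℝ ℝ) (k : ℕ) : ⇑(DD u k) = deriv^[k] u := by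
  induction k with
  | zero => rfl
  | succ k ih =>
    rw [Function.iterate_succ_apply', ← ih]
    funext x
    exact SchwartzMap.derivCLM_apply ℝ (DD u k) x

lemma DD_hasDerivAt (u : SchwartzMap ℝ ℝ) (k : ℕ) (x : ℝ) :
    HasDerivAt (DD u k) (DD u (k+1) x) x := by
  have h := (DD u k).differentiableAt (x := x) |>.hasDerivAt
  have h2 : DD u (k+1) x = deriv (DD u k) x := SchwartzMap.derivCLM_apply ℝ (DD u k) x
  rwa [h2]

lemma schwartz_tendsto_zero (f : SchwartzMap ℝ ℝ) :
    Tendsto (fun x : ℝ => f x) atTop (𝓝 0) := by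
  obtain ⟨C, -, hC⟩ := f.decay 1 0
  apply squeeze_zero_norm' (a := fun x : ℝ => C * x⁻¹)
  · filter_upwards [eventually_ge_atTop (1:ℝ)] with x hx
    have h := hC x
    simp only [pow_one, norm_iteratedFDeriv_zero] at h
    have hx0 : (0:ℝ) < x := lt_of_lt_of_le one_pos hx
    rw [Real.norm_eq_abs, abs_of_pos hx0] at h
    rw [mul_comm C, ← div_eq_inv_mul, le_div_iff₀ hx0, mul_comm]
    exact h
  · simpa using tendsto_inv_atTop_zero.const_mul C

lemma schwartz_tendsto_zero_mul (f : SchwartzMap ℝ ℝ) :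
    Tendsto (fun x : ℝ => x * f x) atTop (𝓝 0) := by
  obtain ⟨C, -, hC⟩ := f.decay 2 0
  apply squeeze_zero_norm' (a := fun x : ℝ => C * x⁻¹)
  · filter_upwards [eventually_ge_atTop (1:ℝ)] with x hx
    have h := hC x
    simp only [norm_iteratedFDeriv_zero] at h
    have hx0 : (0:ℝ) < x := lt_of_lt_of_le one_pos hx
    rw [Real.norm_eq_abs, abs_of_pos hx0] at h
    rw [Real.norm_eq_abs] at h
    rw [Real.norm_eq_abs, abs_mul, abs_of_pos hx0,
      mul_comm C, ← div_eq_inv_mul, le_div_iff₀ hx0]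
    nlinarith [abs_nonneg (f x)]
  · simpa using tendsto_inv_atTop_zero.const_mul C

lemma tend0 (f g : SchwartzMap ℝ ℝ) :
    Tendsto (fun x : ℝ => f x * g x) atTop (𝓝 0) := by
  simpa using (schwartz_tendsto_zero f).mul (schwartz_tendsto_zero g)

lemma tend1 (f g : SchwartzMap ℝ ℝ) :
    Tendsto (fun x : ℝ => (1 + x) * (f x * g x)) atTop (𝓝 0) := by
  have h1 : Tendsto (fun x : ℝ => f x * g x + x * f x * g x) atTop (𝓝 0) := by
    have h2 := (schwartz_tendsto_zero_mul f).mul (schwartz_tendsto_zero g)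
    simpa using (tend0 f g).add h2
  exact h1.congr fun x => by ring

lemma integ0 (f g : SchwartzMap ℝ ℝ) :
    Integrable (fun x : ℝ => f x * g x) := by
  set C := SchwartzMap.seminorm ℝ 0 0 g with hCdef
  refine (f.integrable.norm.const_mul C).mono'
    ((f.continuous.mul g.continuous).aestronglyMeasurable) ?_
  filter_upwards with x
  have hg : ‖g x‖ ≤ C := SchwartzMap.norm_le_seminorm ℝ g x
  rw [norm_mul]
  calc ‖f x‖ * ‖g x‖ ≤ ‖f x‖ * C :=
        mul_le_mul_of_nonneg_left hg (norm_nonneg _)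
    _ = C * ‖f x‖ := by ring

lemma integ1 (f g : SchwartzMap ℝ ℝ) :
    Integrable (fun x : ℝ => (1 + x) * (f x * g x)) := by
  set C := SchwartzMap.seminorm ℝ 0 0 g with hCdef
  have hmaj : Integrable (fun x : ℝ => C * ‖f x‖ + C * (‖x‖ ^ 1 * ‖f x‖)) :=
    (f.integrable.norm.const_mul C).add ((f.integrable_pow_mul volume 1).const_mul C)
  refine hmaj.mono'
    (((continuous_const.add continuous_id).mul
      (f.continuous.mul g.continuous)).aestronglyMeasurable) ?_
  filter_upwards with x
  have hg : ‖g x‖ ≤ C := SchwartzMap.norm_le_seminorm ℝ g x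
  have hC0 : 0 ≤ C := (norm_nonneg _).trans hg
  rw [norm_mul, norm_mul, pow_one]
  have habs : ‖(1:ℝ) + x‖ ≤ 1 + ‖x‖ := (norm_add_le _ _).trans (by simp)
  calc ‖(1:ℝ) + x‖ * (‖f x‖ * ‖g x‖)
      ≤ (1 + ‖x‖) * (‖f x‖ * C) :=
        mul_le_mul habs (mul_le_mul_of_nonneg_left hg (norm_nonneg _))
          (by positivity) (by positivity)
    _ = C * ‖f x‖ + C * (‖x‖ * ‖f x‖) := by ring

/-- For a Schwartz function `u` with `u 0 = 0`, `u_x 0 = 0` and `ε > 0`: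
`2∫_{ℝ⁺} (1+x)(u_{xxx} − ε u_{xxxxx}) u = 3∫ u_x² + ε u_{xx}(0)² + 5ε ∫ u_{xx}²`. -/
theorem stmt16 (u : SchwartzMap ℝ ℝ) (ε : ℝ) (hε : 0 < ε)
    (h0 : u 0 = 0) (h1 : deriv u 0 = 0) :
    2 * ∫ x in Ioi (0:ℝ),
        (1 + x) * (deriv^[3] u x - ε * deriv^[5] u x) * u x =
      3 * (∫ x in Ioi (0:ℝ), (deriv u x) ^ 2) +
        ε * (deriv^[2] u 0) ^ 2 +
        5 * ε * ∫ x in Ioi (0:ℝ), (deriv^[2] u x) ^ 2 := by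
  have hderiv1 : deriv u = ⇑(DD u 1) := by
    rw [← Function.iterate_one deriv, ← DD_coe]
  rw [show deriv^[3] u = ⇑(DD u 3) from (DD_coe u 3).symm,
    show deriv^[5] u = ⇑(DD u 5) from (DD_coe u 5).symm,
    show deriv^[2] u = ⇑(DD u 2) from (DD_coe u 2).symm, hderiv1]
  have e0 : DD u 0 0 = 0 := h0
  have e1 : DD u 1 0 = 0 := by
    have : DD u 1 0 = deriv u 0 := SchwartzMap.derivCLM_apply ℝ u 0
    rw [this, h1]
  -- the antiderivative F and its derivative G
  set F : ℝ → ℝ := fun x =>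
    2*(1+x)*(DD u 2 x)*(DD u 0 x) - (1+x)*(DD u 1 x)^2 - 2*(DD u 1 x)*(DD u 0 x)
    - ε*(2*(1+x)*(DD u 4 x)*(DD u 0 x) - 2*(1+x)*(DD u 3 x)*(DD u 1 x)
        + (1+x)*(DD u 2 x)^2 - 2*(DD u 3 x)*(DD u 0 x) + 4*(DD u 2 x)*(DD u 1 x))
    with hF
  set G : ℝ → ℝ := fun x =>
    2*(1+x)*(DD u 3 x - ε*(DD u 5 x))*(DD u 0 x) - 3*(DD u 1 x)^2 - 5*ε*(DD u 2 x)^2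
    with hG
  have hderiv : ∀ x ∈ Ici (0:ℝ), HasDerivAt F (G x) x := by
    intro x _
    have Hk : ∀ k, HasDerivAt (fun y => DD u k y) (DD u (k+1) x) x :=
      fun k => DD_hasDerivAt u k x
    have hx : HasDerivAt (fun y : ℝ => 1 + y) 1 x := by
      simpa using (hasDerivAt_id x).const_add (1:ℝ)
    have big := ((((hx.const_mul (2:ℝ)).mul (Hk 2)).mul (Hk 0)).sub
        (hx.mul ((Hk 1).pow 2))).sub (((Hk 1).const_mul 2).mul (Hk 0)) |>.sub
      (((((((hx.const_mul (2:ℝ)).mul (Hk 4)).mul (Hk 0)).sub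
          (((hx.const_mul (2:ℝ)).mul (Hk 3)).mul (Hk 1))).add
        (hx.mul ((Hk 2).pow 2))).sub (((Hk 3).const_mul 2).mul (Hk 0)) |>.add
        (((Hk 2).const_mul 4).mul (Hk 1))).const_mul ε)
    refine (big.congr_deriv ?_)
    push_cast
    simp only [hG, Pi.mul_apply, Pi.pow_apply]
    ring
  -- integrability of the pieces
  have i3 : Integrable (fun x : ℝ => (1+x) * (DD u 3 x * DD u 0 x)) := integ1 _ _
  have i5 : Integrable (fun x : ℝ => (1+x) * (DD u 5 x * DD u 0 x)) := integ1 _ _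
  have i1 : Integrable (fun x : ℝ => DD u 1 x * DD u 1 x) := integ0 _ _
  have i2 : Integrable (fun x : ℝ => DD u 2 x * DD u 2 x) := integ0 _ _
  have iA : Integrable (fun x : ℝ => (1+x) * (DD u 3 x - ε*(DD u 5 x)) * (DD u 0 x)) := by
    have := i3.sub (i5.const_mul ε)
    exact this.congr (Eventually.of_forall fun x => by simp only [Pi.sub_apply]; ring)
  have hGint : IntegrableOn G (Ioi (0:ℝ)) := by
    have : Integrable G := by
      have h := ((iA.const_mul 2).sub (i1.const_mul 3)).sub (i2.const_mul (5*ε))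
      exact h.congr (Eventually.of_forall fun x => by simp only [Pi.sub_apply, hG]; ring)
    exact this.integrableOn
  -- F tends to 0 at infinity
  have htend : Tendsto F atTop (𝓝 0) := by
    have big := (((((tend1 (DD u 2) (DD u 0)).const_mul 2).sub
        (tend1 (DD u 1) (DD u 1))).sub ((tend0 (DD u 1) (DD u 0)).const_mul 2)).sub
      ((((((((tend1 (DD u 4) (DD u 0)).const_mul 2).sub
          ((tend1 (DD u 3) (DD u 1)).const_mul 2)).add
        (tend1 (DD u 2) (DD u 2))).sub ((tend0 (DD u 3) (DD u 0)).const_mul 2)).add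
        ((tend0 (DD u 2) (DD u 1)).const_mul 4)).const_mul ε)))
    have big' : Tendsto (fun x : ℝ =>
        2*((1+x)*(DD u 2 x * DD u 0 x)) - ((1+x)*(DD u 1 x * DD u 1 x))
          - 2*(DD u 1 x * DD u 0 x)
          - ε*((2*((1+x)*(DD u 4 x * DD u 0 x)) - 2*((1+x)*(DD u 3 x * DD u 1 x))
              + ((1+x)*(DD u 2 x * DD u 2 x)) - 2*(DD u 3 x * DD u 0 x)
              + 4*(DD u 2 x * DD u 1 x)))) atTop (𝓝 0) := by
      simpa using big
    exact big'.congr fun x => by simp only [hF]; ring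
  have key := integral_Ioi_of_hasDerivAt_of_tendsto' hderiv hGint htend
  -- compute F 0
  have hF0 : F 0 = -(ε * (DD u 2 0)^2) := by
    simp only [hF, e0, e1]
    ring
  rw [hF0, zero_sub, neg_neg] at key
  -- split the integral of G
  have iA2 : IntegrableOn (fun x : ℝ =>
      2 * ((1+x) * (DD u 3 x - ε*(DD u 5 x)) * (DD u 0 x))) (Ioi 0) :=
    (iA.const_mul 2).integrableOn
  have iB3 : IntegrableOn (fun x : ℝ => 3 * (DD u 1 x * DD u 1 x)) (Ioi 0) :=
    (i1.const_mul 3).integrableOn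
  have iC5 : IntegrableOn (fun x : ℝ => 5*ε * (DD u 2 x * DD u 2 x)) (Ioi 0) :=
    (i2.const_mul (5*ε)).integrableOn
  have iAB : IntegrableOn (fun x : ℝ =>
      2 * ((1+x) * (DD u 3 x - ε*(DD u 5 x)) * (DD u 0 x))
        - 3 * (DD u 1 x * DD u 1 x)) (Ioi 0) :=
    (iA2.sub iB3).congr (Eventually.of_forall fun _ => rfl)
  have hsplit : ∫ x in Ioi (0:ℝ), G x =
      2 * (∫ x in Ioi (0:ℝ), (1+x) * (DD u 3 x - ε*(DD u 5 x)) * (DD u 0 x))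
        - 3 * (∫ x in Ioi (0:ℝ), DD u 1 x * DD u 1 x)
        - 5*ε * (∫ x in Ioi (0:ℝ), DD u 2 x * DD u 2 x) := by
    calc ∫ x in Ioi (0:ℝ), G x
        = ∫ x in Ioi (0:ℝ),
            (2 * ((1+x) * (DD u 3 x - ε*(DD u 5 x)) * (DD u 0 x))
              - 3 * (DD u 1 x * DD u 1 x) - 5*ε * (DD u 2 x * DD u 2 x)) :=
          setIntegral_congr_fun measurableSet_Ioi fun x _ => by simp only [hG]; ring
      _ = (∫ x in Ioi (0:ℝ),
            (2 * ((1+x) * (DD u 3 x - ε*(DD u 5 x)) * (DD u 0 x))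
              - 3 * (DD u 1 x * DD u 1 x)))
            - ∫ x in Ioi (0:ℝ), 5*ε * (DD u 2 x * DD u 2 x) :=
          integral_sub iAB iC5
      _ = (∫ x in Ioi (0:ℝ), 2 * ((1+x) * (DD u 3 x - ε*(DD u 5 x)) * (DD u 0 x)))
            - (∫ x in Ioi (0:ℝ), 3 * (DD u 1 x * DD u 1 x))
            - ∫ x in Ioi (0:ℝ), 5*ε * (DD u 2 x * DD u 2 x) := by
          rw [integral_sub iA2 iB3]
      _ = 2 * (∫ x in Ioi (0:ℝ), (1+x) * (DD u 3 x - ε*(DD u 5 x)) * (DD u 0 x))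
            - 3 * (∫ x in Ioi (0:ℝ), DD u 1 x * DD u 1 x)
            - 5*ε * (∫ x in Ioi (0:ℝ), DD u 2 x * DD u 2 x) := by
          rw [integral_const_mul, integral_const_mul, integral_const_mul]
  rw [hsplit] at key
  have hpow1 : (∫ x in Ioi (0:ℝ), DD u 1 x ^ 2) = ∫ x in Ioi (0:ℝ), DD u 1 x * DD u 1 x :=
    setIntegral_congr_fun measurableSet_Ioi fun x _ => sq (DD u 1 x)
  have hpow2 : (∫ x in Ioi (0:ℝ), DD u 2 x ^ 2) = ∫ x in Ioi (0:ℝ), DD u 2 x * DD u 2 x :=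
    setIntegral_congr_fun measurableSet_Ioi fun x _ => sq (DD u 2 x)
  have hAeq : (∫ x in Ioi (0:ℝ), (1 + x) * (DD u 3 x - ε * DD u 5 x) * u x)
      = ∫ x in Ioi (0:ℝ), (1+x) * (DD u 3 x - ε*(DD u 5 x)) * (DD u 0 x) := rfl
  rw [hAeq, hpow1, hpow2]
  linarith [key]
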